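/- (Until induction step for soundness, positive case.) Let φ₁, φ₂ be STL formulas and x : {0,…,H} → ℝⁿ a signal such that for i ∈ {1,2} and every time s ∈ {0,…,H}, θ⁺_{φᵢ}(x,s) > 0 implies χ_{φᵢ}(x,s) = +1. Then for every a ≤ b and every time t ∈ {0,…,H}, θ⁺_{φ₁ U_[a,b] φ₂}(x,t) > 0 implies χ_{φ₁ U_[a,b] φ₂}(x,t) = +1. -/
import Mathlib


namespace STLTime

/-- STL formulas over states in `ℝⁿ`: predicates `μ(x) ≥ 0`, negation,
conjunction, and bounded Until `U_[a,b]` with `a ≤ b`. -/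
inductive STL (n : ℕ) : Type where
  | pred : ((Fin n → ℝ) → ℝ) → STL n
  | not  : STL n → STL n
  | and  : STL n → STL n → STL n
  | untl : (a b : ℕ) → a ≤ b → STL n → STL n → STL n

/-- Characteristic function `χ_φ(x,t) ∈ {-1,+1}` over horizon `H`. -/
noncomputable def chi {n : ℕ} (H : ℕ) (x : ℕ → Fin n → ℝ) : STL n → ℕ → ℤ
  | .pred μ, t => if 0 ≤ μ (x t) then 1 else -1
  | .not φ, t => - chi H x φ t
  | .and φ₁ φ₂, t => min (chi H x φ₁ t) (chi H x φ₂ t)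
  | .untl a b _ φ₁ φ₂, t =>
      if h : (Finset.Icc (t + a) (min (t + b) H)).Nonempty then
        (Finset.Icc (t + a) (min (t + b) H)).sup' h fun t' =>
          (Finset.Ico t t').fold min (chi H x φ₂ t') fun t'' => chi H x φ₁ t''
      else -1

/-- Right time robustness `θ⁺_φ(x,t)` over horizon `H`. -/
noncomputable def thetaPlus {n : ℕ} (H : ℕ) (x : ℕ → Fin n → ℝ) : STL n → ℕ → ℤ
  | .pred μ, t =>
      chi H x (.pred μ) t *
        ((sSup {τ : ℕ | t + τ ≤ H ∧
            ∀ t' ∈ Set.Icc t (t + τ),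
              chi H x (.pred μ) t' = chi H x (.pred μ) t} : ℕ) : ℤ)
  | .not φ, t => - thetaPlus H x φ t
  | .and φ₁ φ₂, t => min (thetaPlus H x φ₁ t) (thetaPlus H x φ₂ t)
  | .untl a b _ φ₁ φ₂, t =>
      if h : (Finset.Icc (t + a) (min (t + b) H)).Nonempty then
        (Finset.Icc (t + a) (min (t + b) H)).sup' h fun t' =>
          (Finset.Ico t t').fold min (thetaPlus H x φ₂ t') fun t'' => thetaPlus H x φ₁ t''
      else -1

/-- Left time robustness `θ⁻_φ(x,t)` over horizon `H`. -/
noncomputable def thetaMinus {n : ℕ} (H : ℕ) (x : ℕ → Fin n → ℝ) : STL n → ℕ → ℤ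
  | .pred μ, t =>
      chi H x (.pred μ) t *
        ((sSup {τ : ℕ | τ ≤ t ∧
            ∀ t' ∈ Set.Icc (t - τ) t,
              chi H x (.pred μ) t' = chi H x (.pred μ) t} : ℕ) : ℤ)
  | .not φ, t => - thetaMinus H x φ t
  | .and φ₁ φ₂, t => min (thetaMinus H x φ₁ t) (thetaMinus H x φ₂ t)
  | .untl a b _ φ₁ φ₂, t =>
      if h : (Finset.Icc (t + a) (min (t + b) H)).Nonempty then
        (Finset.Icc (t + a) (min (t + b) H)).sup' h fun t' =>
          (Finset.Ico t t').fold min (thetaMinus H x φ₂ t') fun t'' => thetaMinus H x φ₁ t''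
      else -1


lemma chi_bounds {n : ℕ} (H : ℕ) (x : ℕ → Fin n → ℝ) (φ : STL n) :
    ∀ t, -1 ≤ chi H x φ t ∧ chi H x φ t ≤ 1 := by
  induction φ with
  | pred μ => intro t; unfold chi; split <;> simp
  | not φ ih => intro t
                have := ih t
                unfold chi; omega
  | and φ₁ φ₂ ih₁ ih₂ =>
      intro t
      have h1 := ih₁ t; have h2 := ih₂ t
      unfold chi
      constructor
      · exact le_min h1.1 h2.1
      · exact le_trans (min_le_left _ _) h1.2
  | untl a b hab φ₁ φ₂ ih₁ ih₂ =>
      intro t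
      unfold chi
      split
      · next hne =>
          constructor
          · obtain ⟨t', ht'⟩ := hne
            refine le_trans ?_ (Finset.le_sup' _ ht')
            rw [Finset.le_fold_min]
            exact ⟨(ih₂ t').1, fun t'' _ => (ih₁ t'').1⟩
          · apply Finset.sup'_le
            intro t' _
            rw [Finset.fold_min_le]
            exact Or.inl (ih₂ t').2
      · simp

/-- Until induction step for soundness, positive case. -/
theorem until_soundness_pos {n H : ℕ} (φ₁ φ₂ : STL n) (x : ℕ → Fin n → ℝ)
    (h1 : ∀ s ≤ H, 0 < thetaPlus H x φ₁ s → chi H x φ₁ s = 1)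
    (h2 : ∀ s ≤ H, 0 < thetaPlus H x φ₂ s → chi H x φ₂ s = 1)
    (a b : ℕ) (hab : a ≤ b) (t : ℕ) (ht : t ≤ H)
    (h : 0 < thetaPlus H x (.untl a b hab φ₁ φ₂) t) :
    chi H x (.untl a b hab φ₁ φ₂) t = 1 := by
  unfold thetaPlus at h
  unfold chi
  split at h
  · next hne =>
      rw [Finset.lt_sup'_iff] at h
      obtain ⟨t', ht', hfold⟩ := h
      rw [Int.lt_iff_add_one_le, zero_add, Finset.le_fold_min] at hfold
      have ht'mem := Finset.mem_Icc.mp ht'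
      have ht'H : t' ≤ H := le_trans ht'mem.2 (min_le_right _ _)
      have hc2 : chi H x φ₂ t' = 1 := h2 t' ht'H (by omega)
      have hc1 : ∀ t'' ∈ Finset.Ico t t', chi H x φ₁ t'' = 1 := by
        intro t'' htt
        have := (Finset.mem_Ico.mp htt).2
        exact h1 t'' (by omega) (by have := hfold.2 t'' htt; omega)
      rw [dif_pos ⟨t', ht'⟩]
      apply le_antisymm
      · apply Finset.sup'_le
        intro s hs
        rw [Finset.fold_min_le]
        exact Or.inl (chi_bounds H x φ₂ s).2
      · refine le_trans ?_ (Finset.le_sup' _ ht')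
        rw [Finset.le_fold_min]
        exact ⟨hc2.ge, fun t'' htt => (hc1 t'' htt).ge⟩
  · omega


end STLTime
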